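/- arXiv:2109.13627 — 4 statements merged into one kernel-verified Lean document; each statement's English description precedes it below -/
import Mathlib

section
/- Let k ≥ 2. If a signed graph (G,σ) admits a complete k-colouring, then the underlying graph G has a matching of size at least ⌊k/2⌋. Consequently, if the maximum matching of G has size α, then ψ(G,σ) ≤ 2α + 1. -/
open SimpleGraph

/-- A signature on a graph: a symmetric assignment of signs (`1` or `-1`) to pairs of
vertices (only the values on edges are relevant). -/
def IsSignature {V : Type*} (σ : V → V → ℤ) : Prop :=
  (∀ u v, σ u v = σ v u) ∧ (∀ u v, σ u v = 1 ∨ σ u v = -1)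

/-- `σ'` is obtained from `σ` by switching a set of vertices: every vertex gets a
switching value `±1`, and the sign of an edge is multiplied by the values at its ends. -/
def SwitchEquiv {V : Type*} (σ σ' : V → V → ℤ) : Prop :=
  ∃ s : V → ℤ, (∀ v, s v = 1 ∨ s v = -1) ∧ ∀ u v, σ' u v = s u * s v * σ u v

/-- The colour set `M_k`, as a set of integers: `{±1, …, ±n}` if `k = 2n`, and
`{-n, …, -1, 0, 1, …, n}` if `k = 2n+1` (colour `±0` is represented by `0`). -/
def colourSet (k : ℕ) : Set ℤ :=
  if Even k then {i | i ≠ 0 ∧ i.natAbs ≤ k / 2} else {i | i.natAbs ≤ k / 2}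

/-- A proper `k`-colouring of the signed graph `(G, σ)`: colours come from `M_k` and,
for each edge `uv`, `φ u ≠ σ(uv) · φ v`. -/
def IsProperColouring {V : Type*} (G : SimpleGraph V) (σ : V → V → ℤ) (k : ℕ)
    (φ : V → ℤ) : Prop :=
  (∀ v, φ v ∈ colourSet k) ∧ ∀ u v, G.Adj u v → φ u ≠ σ u v * φ v

/-- The sign of an integer for the purpose of switching: `-1` for negative colours,
`1` otherwise. -/
def isgn (x : ℤ) : ℤ := if x < 0 then -1 else 1

/-- The sign of the edge `uv` after switching every vertex whose colour is negative. -/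
def redSign {V : Type*} (σ : V → V → ℤ) (φ : V → ℤ) (u v : V) : ℤ :=
  isgn (φ u) * isgn (φ v) * σ u v

/-- After switching all negatively-coloured vertices and taking absolute values of
colours, there is an edge of `(G, σ)` whose ends get values `i` and `j` and whose
resulting sign is `s`. -/
def HasEdgeType {V : Type*} (G : SimpleGraph V) (σ : V → V → ℤ) (φ : V → ℤ)
    (i j : ℕ) (s : ℤ) : Prop :=
  ∃ u v, G.Adj u v ∧ (φ u).natAbs = i ∧ (φ v).natAbs = j ∧ redSign σ φ u v = s

/-- A complete `k`-colouring of the signed graph `(G, σ)`. -/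
def IsCompleteColouring {V : Type*} (G : SimpleGraph V) (σ : V → V → ℤ) (k : ℕ)
    (φ : V → ℤ) : Prop :=
  IsProperColouring G σ k φ ∧
  (∀ i j : ℕ, (i : ℤ) ∈ colourSet k → (j : ℤ) ∈ colourSet k → i ≠ j →
    HasEdgeType G σ φ i j 1 ∧ HasEdgeType G σ φ i j (-1)) ∧
  (∀ i : ℕ, 1 ≤ i → (i : ℤ) ∈ colourSet k → HasEdgeType G σ φ i i (-1))

/-- Some signed graph equivalent to `(G, σ)` admits a complete `k`-colouring. -/
def AdmitsComplete {V : Type*} (G : SimpleGraph V) (σ : V → V → ℤ) (k : ℕ) : Prop :=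
  ∃ σ', IsSignature σ' ∧ SwitchEquiv σ σ' ∧ ∃ φ, IsCompleteColouring G σ' k φ

/-- The achromatic number of the signed graph `(G, σ)`: the largest `k` such that some
signed graph equivalent to `(G, σ)` admits a complete `k`-colouring. -/
noncomputable def psi {V : Type*} (G : SimpleGraph V) (σ : V → V → ℤ) : ℕ :=
  sSup {k | AdmitsComplete G σ k}

/-- The chromatic number of the signed graph `(G, σ)`: the smallest `k` such that
`(G, σ)` admits a proper `k`-colouring. -/
noncomputable def chi {V : Type*} (G : SimpleGraph V) (σ : V → V → ℤ) : ℕ :=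
  sInf {k | ∃ φ, IsProperColouring G σ k φ}

/-!
Completeness forces, for every `i = 1, …, ⌊k/2⌋`, an edge whose two ends both have absolute
colour `i`. Edges chosen for different `i` share no vertex, since a vertex has only one absolute
colour, so they form a matching with `⌊k/2⌋` edges. Hence `⌊k/2⌋ ≤ α` for every `k` counted
in `ψ`, i.e. `k ≤ 2α + 1`.
-/

namespace SimpleGraph

variable {V ι : Type*} {G : SimpleGraph V}

theorem exists_isMatching_ncard_edgeSet_eq_of_forall_exists_adj (f : V → ι) (s : Finset ι)
    (h : ∀ i ∈ s, ∃ u v, G.Adj u v ∧ f u = i ∧ f v = i) :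
    ∃ M : G.Subgraph, M.IsMatching ∧ M.edgeSet.ncard = s.card := by
  choose u v hadj hu hv using h
  let e : s → G.Subgraph := fun i ↦ G.subgraphOfAdj (hadj i i.2)
  have hsupport (i : s) : (e i).support = {u i i.2, v i i.2} :=
    support_subgraphOfAdj _
  have hlabel (i : s) : ∀ x ∈ (e i).support, f x = i := by
    simp only [hsupport, Set.mem_insert_iff, Set.mem_singleton_iff]
    rintro x (rfl | rfl)
    exacts [hu i i.2, hv i i.2]
  have hdisj : Pairwise fun i j ↦ Disjoint (e i).support (e j).support := by
    intro i j hij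
    refine Set.disjoint_left.mpr fun x hxi hxj ↦ hij (Subtype.ext ?_)
    rw [← hlabel i x hxi, hlabel j x hxj]
  have hinj : Function.Injective fun i : s ↦ s(u i i.2, v i i.2) := by
    intro i j (hij : s(u i i.2, v i i.2) = s(u j j.2, v j j.2))
    have hmem : u i i.2 ∈ s(u j j.2, v j j.2) := hij ▸ Sym2.mem_mk_left _ _
    refine Subtype.ext ?_
    rw [← hlabel i (u i i.2) (by simp [hsupport]),
      hlabel j (u i i.2) (by simpa [hsupport] using Sym2.mem_iff.mp hmem)]
  refine ⟨⨆ i, e i, Subgraph.IsMatching.iSup (fun i ↦ .subgraphOfAdj _) hdisj, ?_⟩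
  have hedges : (⨆ i, e i).edgeSet = Set.range fun i : s ↦ s(u i i.2, v i i.2) := by
    simp only [e, Subgraph.edgeSet_iSup, edgeSet_subgraphOfAdj, Set.iUnion_singleton_eq_range]
  rw [hedges, Set.ncard_range_of_injective hinj, Nat.card_eq_fintype_card, Fintype.card_coe]

end SimpleGraph

theorem natCast_mem_colourSet {k i : ℕ} (hi : 1 ≤ i) (hik : i ≤ k / 2) :
    (i : ℤ) ∈ colourSet k := by
  unfold colourSet
  split_ifs
  · exact ⟨by omega, by simpa using hik⟩
  · simpa using hik

theorem IsCompleteColouring.exists_isMatching {V : Type*} {G : SimpleGraph V}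
    {σ : V → V → ℤ} {k : ℕ} {φ : V → ℤ} (h : IsCompleteColouring G σ k φ) :
    ∃ M : G.Subgraph, M.IsMatching ∧ M.edgeSet.ncard = k / 2 := by
  have hedge : ∀ i ∈ Finset.Icc 1 (k / 2),
      ∃ u v, G.Adj u v ∧ (φ u).natAbs = i ∧ (φ v).natAbs = i := by
    intro i hi
    obtain ⟨hi1, hik⟩ := Finset.mem_Icc.mp hi
    obtain ⟨u, v, huv, hu, hv, -⟩ := h.2.2 i hi1 (natCast_mem_colourSet hi1 hik)
    exact ⟨u, v, huv, hu, hv⟩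
  simpa using G.exists_isMatching_ncard_edgeSet_eq_of_forall_exists_adj _ _ hedge

theorem psi_le_of_forall_isMatching_ncard_le {V : Type*} {G : SimpleGraph V}
    (σ : V → V → ℤ) {α : ℕ} (hmax : ∀ M : G.Subgraph, M.IsMatching → M.edgeSet.ncard ≤ α) :
    psi G σ ≤ 2 * α + 1 := by
  refine csSup_le' fun k ⟨_, _, _, _, hφ⟩ ↦ ?_
  obtain ⟨M, hM, hcard⟩ := hφ.exists_isMatching
  have := hmax M hM
  omega

theorem statement0_general {V : Type*} (G : SimpleGraph V) (σ : V → V → ℤ) :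
    (∀ k : ℕ, 2 ≤ k → (∃ φ, IsCompleteColouring G σ k φ) →
      ∃ M : G.Subgraph, M.IsMatching ∧ k / 2 ≤ M.edgeSet.ncard) ∧
    (∀ α : ℕ,
      (∃ M : G.Subgraph, M.IsMatching ∧ M.edgeSet.ncard = α) →
      (∀ M : G.Subgraph, M.IsMatching → M.edgeSet.ncard ≤ α) →
      psi G σ ≤ 2 * α + 1) := by
  refine ⟨fun k _ ⟨φ, hφ⟩ ↦ ?_, fun α _ hmax ↦ psi_le_of_forall_isMatching_ncard_le σ hmax⟩
  obtain ⟨M, hM, hcard⟩ := hφ.exists_isMatching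
  exact ⟨M, hM, hcard.ge⟩

/-- If a signed graph admits a complete `k`-colouring (`k ≥ 2`), then the
underlying graph has a matching of size at least `⌊k/2⌋`; consequently, if the maximum
matching of `G` has size `α`, then `ψ(G,σ) ≤ 2α + 1`. -/
theorem statement0 {V : Type*} [Fintype V] (G : SimpleGraph V) (σ : V → V → ℤ)
    (hσ : IsSignature σ) :
    (∀ k : ℕ, 2 ≤ k → (∃ φ, IsCompleteColouring G σ k φ) →
      ∃ M : G.Subgraph, M.IsMatching ∧ k / 2 ≤ M.edgeSet.ncard) ∧
    (∀ α : ℕ,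
      (∃ M : G.Subgraph, M.IsMatching ∧ M.edgeSet.ncard = α) →
      (∀ M : G.Subgraph, M.IsMatching → M.edgeSet.ncard ≤ α) →
      psi G σ ≤ 2 * α + 1) :=
  statement0_general G σ
end

section
/- Let k ≥ 1 and let (G,σ) be a signed graph. If |E(G)| < k² − 1, then ψ(G,σ) < 2k − 1; and if |E(G)| < k², then ψ(G,σ) < 2k. -/
open SimpleGraph

namespace Statement2Aux

/-- The number of edge types required for a complete `k`-colouring. -/
def fcount (k : ℕ) : ℕ := (k / 2) * (k / 2) + (k % 2) * (2 * (k / 2))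

lemma fcount_even (n : ℕ) : fcount (2 * n) = n * n := by
  unfold fcount
  have h1 : 2 * n / 2 = n := by omega
  have h2 : 2 * n % 2 = 0 := by omega
  rw [h1, h2]; ring

lemma fcount_odd (n : ℕ) : fcount (2 * n + 1) = n * n + 2 * n := by
  unfold fcount
  have h1 : (2 * n + 1) / 2 = n := by omega
  have h2 : (2 * n + 1) % 2 = 1 := by omega
  rw [h1, h2]; ring

lemma fcount_mono : Monotone fcount := by
  apply monotone_nat_of_le_succ
  intro n
  rcases Nat.even_or_odd n with ⟨m, hm⟩ | ⟨m, hm⟩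
  · have h : n = 2 * m := by omega
    rw [h, fcount_even, fcount_odd]; omega
  · have h : n = 2 * m + 1 := by omega
    rw [h, show 2 * m + 1 + 1 = 2 * (m + 1) from by ring, fcount_odd, fcount_even]
    nlinarith

/-- Canonical type associated to an ordered pair. -/
def tau (p : ℕ × ℕ) : ℕ × ℕ × ℤ :=
  if p.1 < p.2 then (p.1, p.2, 1) else if p.2 < p.1 then (p.2, p.1, -1) else (p.1, p.1, -1)

lemma tau_le (p : ℕ × ℕ) : (tau p).1 ≤ (tau p).2.1 := by
  unfold tau; split_ifs <;> dsimp <;> omega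

lemma rho_tau (a b : ℕ) :
    (if (tau (a, b)).2.2 = 1 then ((tau (a, b)).1, (tau (a, b)).2.1)
      else ((tau (a, b)).2.1, (tau (a, b)).1)) = (a, b) := by
  rcases lt_trichotomy a b with h | h | h
  · simp [tau, h]
  · subst h; simp [tau]
  · have h' : ¬ a < b := by omega
    simp [tau, h, h']

lemma tau_injective : Function.Injective tau := by
  intro p q h
  have hp := rho_tau p.1 p.2
  have hq := rho_tau q.1 q.2
  rw [Prod.mk.eta] at hp hq
  rw [← hp, ← hq, h]

lemma redSign_symm {V : Type*} (σ' : V → V → ℤ) (hσ' : IsSignature σ') (φ : V → ℤ)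
    (u v : V) : redSign σ' φ u v = redSign σ' φ v u := by
  unfold redSign; rw [hσ'.1 u v]; ring

lemma inj_bound {V : Type*} [Fintype V] (G : SimpleGraph V) (σ' : V → V → ℤ)
    (hσ' : IsSignature σ') (k : ℕ) (φ : V → ℤ) (hφ : IsCompleteColouring G σ' k φ)
    (A : Finset ℕ) (hmemA : ∀ i : ℕ, i ∈ A ↔ (i : ℤ) ∈ colourSet k) :
    A.card * A.card - A.card + (A.filter fun i => 1 ≤ i).card ≤ G.edgeSet.ncard := by
  classical
  set D : Finset (ℕ × ℕ) := A.offDiag ∪ (A.filter fun i => 1 ≤ i).image (fun i => (i, i))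
    with hD
  have hDcard : D.card = A.card * A.card - A.card + (A.filter fun i => 1 ≤ i).card := by
    have hdisj : Disjoint A.offDiag ((A.filter fun i => 1 ≤ i).image fun i => (i, i)) := by
      rw [Finset.disjoint_left]
      intro p hp hp'
      rw [Finset.mem_offDiag] at hp
      rw [Finset.mem_image] at hp'
      obtain ⟨i, _, rfl⟩ := hp'
      exact hp.2.2 rfl
    rw [hD, Finset.card_union_of_disjoint hdisj, Finset.offDiag_card,
      Finset.card_image_of_injective _ (fun a b h => (Prod.ext_iff.1 h).1)]
  have hedge : ∀ p ∈ D, HasEdgeType G σ' φ (tau p).1 (tau p).2.1 (tau p).2.2 := by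
    intro p hp
    rw [hD, Finset.mem_union] at hp
    rcases hp with hp | hp
    · rw [Finset.mem_offDiag] at hp
      obtain ⟨h1, h2, h3⟩ := hp
      rcases lt_or_gt_of_ne h3 with hlt | hgt
      · have := (hφ.2.1 p.1 p.2 ((hmemA _).1 h1) ((hmemA _).1 h2) h3).1
        simpa [tau, hlt] using this
      · have := (hφ.2.1 p.2 p.1 ((hmemA _).1 h2) ((hmemA _).1 h1) (Ne.symm h3)).2
        have hnlt : ¬ p.1 < p.2 := by omega
        simpa [tau, hnlt, hgt] using this
    · rw [Finset.mem_image] at hp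
      obtain ⟨i, hi, rfl⟩ := hp
      rw [Finset.mem_filter] at hi
      have := hφ.2.2 i hi.2 ((hmemA _).1 hi.1)
      simpa [tau] using this
  rw [← hDcard]
  by_cases hDemp : D = ∅
  · rw [hDemp]; simp
  · obtain ⟨p0, hp0⟩ := Finset.nonempty_iff_ne_empty.2 hDemp
    obtain ⟨u0, v0, hadj0, -, -, -⟩ := hedge p0 hp0
    have hwit : ∀ p : ℕ × ℕ, ∃ uv : V × V,
        p ∈ D → G.Adj uv.1 uv.2 ∧ (φ uv.1).natAbs = (tau p).1 ∧
          (φ uv.2).natAbs = (tau p).2.1 ∧ redSign σ' φ uv.1 uv.2 = (tau p).2.2 := by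
      intro p
      by_cases hp : p ∈ D
      · obtain ⟨u, v, h⟩ := hedge p hp
        exact ⟨(u, v), fun _ => h⟩
      · exact ⟨(u0, v0), fun h => absurd h hp⟩
    choose w hw using hwit
    have hfin : G.edgeSet.Finite := Set.toFinite _
    have hmaps : ∀ p ∈ D, s((w p).1, (w p).2) ∈ hfin.toFinset := by
      intro p hp
      rw [Set.Finite.mem_toFinset, SimpleGraph.mem_edgeSet]
      exact (hw p hp).1
    have hinj : Set.InjOn (fun p => s((w p).1, (w p).2)) ↑D := by
      intro p hp q hq heq
      rw [Finset.mem_coe] at hp hq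
      obtain ⟨ha1, hb1, hc1, hd1⟩ := hw p hp
      obtain ⟨ha2, hb2, hc2, hd2⟩ := hw q hq
      simp only [Sym2.eq_iff] at heq
      have hτ : tau p = tau q := by
        rcases heq with ⟨h1, h2⟩ | ⟨h1, h2⟩
        · refine Prod.ext ?_ (Prod.ext ?_ ?_)
          · rw [← hb1, ← hb2, h1]
          · rw [← hc1, ← hc2, h2]
          · rw [← hd1, ← hd2, h1, h2]
        · have e1 : (tau p).1 = (tau q).2.1 := by rw [← hb1, ← hc2, h1]
          have e2 : (tau p).2.1 = (tau q).1 := by rw [← hc1, ← hb2, h2]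
          have e3 : (tau p).2.2 = (tau q).2.2 := by
            rw [← hd1, ← hd2, h1, h2, redSign_symm σ' hσ' φ]
          have l1 := tau_le p
          have l2 := tau_le q
          refine Prod.ext (by omega) (Prod.ext (by omega) e3)
      exact tau_injective hτ
    have hle := Finset.card_le_card_of_injOn _ hmaps hinj
    rwa [← Set.ncard_eq_toFinset_card _ hfin] at hle

lemma card_bound {V : Type*} [Fintype V] (G : SimpleGraph V) (σ' : V → V → ℤ)
    (hσ' : IsSignature σ') (k : ℕ) (φ : V → ℤ) (hφ : IsCompleteColouring G σ' k φ) :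
    fcount k ≤ G.edgeSet.ncard := by
  rcases Nat.even_or_odd k with ⟨n, hn⟩ | ⟨n, hn⟩
  · -- k = 2n, A = Icc 1 n
    have hk : k = 2 * n := by omega
    subst hk
    have hmemA : ∀ i : ℕ, i ∈ Finset.Icc 1 n ↔ (i : ℤ) ∈ colourSet (2 * n) := by
      intro i
      have hev : Even (2 * n) := ⟨n, by omega⟩
      simp only [colourSet, if_pos hev, Set.mem_setOf_eq, Int.natAbs_natCast,
        Finset.mem_Icc, Nat.cast_ne_zero]
      constructor
      · rintro ⟨h1, h2⟩; exact ⟨by omega, by omega⟩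
      · rintro ⟨h1, h2⟩; exact ⟨by omega, by omega⟩
    have := inj_bound G σ' hσ' (2 * n) φ hφ (Finset.Icc 1 n) hmemA
    have hc : (Finset.Icc 1 n).card = n := by rw [Nat.card_Icc]; omega
    have hf : (Finset.Icc 1 n).filter (fun i => 1 ≤ i) = Finset.Icc 1 n := by
      apply Finset.filter_true_of_mem
      intro i hi; exact (Finset.mem_Icc.1 hi).1
    rw [hf, hc] at this
    rw [fcount_even]
    have hnn : n ≤ n * n := by nlinarith
    calc n * n = n * n - n + n := by omega
    _ ≤ G.edgeSet.ncard := this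
  · -- k = 2n+1, A = Icc 0 n
    have hk : k = 2 * n + 1 := by omega
    subst hk
    have hmemA : ∀ i : ℕ, i ∈ Finset.Icc 0 n ↔ (i : ℤ) ∈ colourSet (2 * n + 1) := by
      intro i
      have hod : ¬ Even (2 * n + 1) := by
        simp [Nat.even_add_one, Nat.even_iff]
      simp only [colourSet, if_neg hod, Set.mem_setOf_eq, Int.natAbs_natCast, Finset.mem_Icc]
      constructor
      · rintro ⟨h1, h2⟩; omega
      · intro h; exact ⟨by omega, by omega⟩
    have := inj_bound G σ' hσ' (2 * n + 1) φ hφ (Finset.Icc 0 n) hmemA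
    have hc : (Finset.Icc 0 n).card = n + 1 := by rw [Nat.card_Icc]; omega
    have hf : (Finset.Icc 0 n).filter (fun i => 1 ≤ i) = Finset.Icc 1 n := by
      ext i
      simp only [Finset.mem_filter, Finset.mem_Icc]
      omega
    have hc2 : (Finset.Icc 1 n).card = n := by rw [Nat.card_Icc]; omega
    rw [hf, hc, hc2] at this
    rw [fcount_odd]
    have hmul : (n + 1) * (n + 1) = n * n + 2 * n + 1 := by ring
    rw [hmul] at this
    have : n * n + 2 * n + 1 - (n + 1) + n = n * n + 2 * n := by
      generalize n * n = t
      omega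
    omega

lemma psi_lt {V : Type*} [Fintype V] (G : SimpleGraph V) (σ : V → V → ℤ) (m : ℕ)
    (hm : 1 ≤ m) (hE : G.edgeSet.ncard < fcount m) : psi G σ < m := by
  have hub : ∀ k' ∈ {k | AdmitsComplete G σ k}, k' < m := by
    intro k' hk'
    by_contra hge
    push_neg at hge
    obtain ⟨σ', hsig, -, φ, hφ⟩ := hk'
    have h1 := card_bound G σ' hsig k' φ hφ
    have h2 := fcount_mono hge
    exact absurd (h2.trans h1) (not_le.2 hE)
  unfold psi
  rcases Set.eq_empty_or_nonempty {k | AdmitsComplete G σ k} with h | h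
  · rw [h, csSup_empty]
    exact hm
  · exact hub _ (Nat.sSup_mem h ⟨m, fun x hx => (hub x hx).le⟩)

end Statement2Aux

/-- If `|E(G)| < k² − 1` then `ψ(G,σ) < 2k − 1`, and if `|E(G)| < k²`
then `ψ(G,σ) < 2k`. -/
theorem statement2 {V : Type*} [Fintype V] (G : SimpleGraph V) (σ : V → V → ℤ)
    (hσ : IsSignature σ) (k : ℕ) (hk : 1 ≤ k) :
    (G.edgeSet.ncard < k ^ 2 - 1 → psi G σ < 2 * k - 1) ∧
    (G.edgeSet.ncard < k ^ 2 → psi G σ < 2 * k) := by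
  constructor
  · intro hE
    apply Statement2Aux.psi_lt G σ (2 * k - 1) (by omega)
    have h1 : 2 * k - 1 = 2 * (k - 1) + 1 := by omega
    rw [h1, Statement2Aux.fcount_odd]
    obtain ⟨j, rfl⟩ : ∃ j, k = j + 1 := ⟨k - 1, by omega⟩
    have e : (j + 1) ^ 2 = j * j + 2 * j + 1 := by ring
    rw [e] at hE
    simp only [Nat.add_sub_cancel]
    generalize j * j = t at hE ⊢
    omega
  · intro hE
    apply Statement2Aux.psi_lt G σ (2 * k) (by omega)
    rw [Statement2Aux.fcount_even]
    have e : k ^ 2 = k * k := by ring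
    rwa [e] at hE
end

section
/- For every n ≥ 1, the signed complete graph (K_n,+) in which all edges are positive satisfies ψ(K_n,+) = n. -/
open SimpleGraph

/-!
Numbering the `n` vertices of `(K_n, +)` bijectively by the colours of `M_n` gives a complete
colouring: after switching at the negatively coloured vertices, the edge between the vertices
coloured `a` and `b` has sign `sgn a · sgn b`, so choosing the signs of `a = ±i`, `b = ±j`
realises every required edge type. Conversely, in a complete `k`-colouring every absolute value
`1 ≤ i ≤ ⌊k/2⌋` occurs at both ends of an edge, hence on at least two vertices, and for odd `k`
the value `0` occurs as well, so there are at least `k` vertices.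
-/

open Finset

lemma mem_colourSet_iff {k : ℕ} {c : ℤ} :
    c ∈ colourSet k ↔ c.natAbs ≤ k / 2 ∧ (Even k → c ≠ 0) := by
  unfold colourSet
  split_ifs with hk <;> simp [hk, and_comm]

lemma neg_mem_colourSet {k : ℕ} {c : ℤ} (hc : c ∈ colourSet k) : -c ∈ colourSet k := by
  rw [mem_colourSet_iff] at hc ⊢
  simpa using hc

noncomputable def colourFinset (k : ℕ) : Finset ℤ :=
  if Even k then (Icc (-((k / 2 : ℕ) : ℤ)) (k / 2 : ℕ)).erase 0
  else Icc (-((k / 2 : ℕ) : ℤ)) (k / 2 : ℕ)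

lemma coe_colourFinset (k : ℕ) : (colourFinset k : Set ℤ) = colourSet k := by
  ext c
  rw [mem_colourSet_iff, colourFinset]
  split_ifs with hk <;> simp [hk] <;> omega

lemma card_colourFinset (k : ℕ) : #(colourFinset k) = k := by
  rw [colourFinset]
  split_ifs with hk
  · rw [card_erase_of_mem (by simp; omega), Int.card_Icc]
    have := Nat.even_iff.mp hk
    omega
  · rw [Int.card_Icc]
    have := Nat.odd_iff.mp (Nat.not_even_iff_odd.mp hk)
    omega

lemma exists_injective_range_eq_colourSet (k : ℕ) :
    ∃ φ : Fin k → ℤ, Function.Injective φ ∧ Set.range φ = colourSet k := by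
  let e := (Finset.equivFinOfCardEq (card_colourFinset k)).symm
  refine ⟨fun v => e v, Subtype.val_injective.comp e.injective, ?_⟩
  change Set.range (Subtype.val ∘ e) = _
  rw [← coe_colourFinset, Set.range_comp, e.range_eq_univ, Set.image_univ, Subtype.range_coe]

lemma isgn_of_nonneg {x : ℤ} (hx : 0 ≤ x) : isgn x = 1 := if_neg (not_lt.mpr hx)

lemma isgn_of_neg {x : ℤ} (hx : x < 0) : isgn x = -1 := if_pos hx

lemma hasEdgeType_top_one {V : Type*} {φ : V → ℤ} {a b : ℤ} (ha : a ∈ Set.range φ)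
    (hb : b ∈ Set.range φ) (hab : a ≠ b) :
    HasEdgeType ⊤ (fun _ _ => 1) φ a.natAbs b.natAbs (isgn a * isgn b) := by
  obtain ⟨u, rfl⟩ := ha
  obtain ⟨v, rfl⟩ := hb
  exact ⟨u, v, fun h => hab (congrArg φ h), rfl, rfl, mul_one _⟩

theorem isCompleteColouring_top_one {V : Type*} {k : ℕ} {φ : V → ℤ}
    (hinj : Function.Injective φ) (hrange : Set.range φ = colourSet k) :
    IsCompleteColouring ⊤ (fun _ _ => 1) k φ := by
  have hφ : ∀ {c}, c ∈ colourSet k → c ∈ Set.range φ := fun hc => hrange ▸ hc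
  refine ⟨⟨fun v => hrange ▸ ⟨v, rfl⟩, fun u v huv h => huv.ne (hinj (by simpa using h))⟩,
    fun i j hi hj hij => ⟨?_, ?_⟩, fun i hi1 hi => ?_⟩
  · simpa [isgn_of_nonneg] using hasEdgeType_top_one (hφ hi) (hφ hj) (by omega)
  · by_cases hj0 : j = 0
    · subst hj0
      simpa [isgn_of_nonneg, isgn_of_neg (x := -(i : ℤ)) (by omega)] using
        hasEdgeType_top_one (hφ (neg_mem_colourSet hi)) (hφ hj) (by omega)
    · simpa [isgn_of_nonneg, isgn_of_neg (x := -(j : ℤ)) (by omega)] using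
        hasEdgeType_top_one (hφ hi) (hφ (neg_mem_colourSet hj)) (by omega)
  · simpa [isgn_of_nonneg, isgn_of_neg (x := -(i : ℤ)) (by omega)] using
      hasEdgeType_top_one (hφ hi) (hφ (neg_mem_colourSet hi)) (by omega)

theorem admitsComplete_top_one (n : ℕ) :
    AdmitsComplete (⊤ : SimpleGraph (Fin n)) (fun _ _ => 1) n := by
  obtain ⟨φ, hinj, hrange⟩ := exists_injective_range_eq_colourSet n
  exact ⟨fun _ _ => 1, ⟨fun _ _ => rfl, fun _ _ => Or.inl rfl⟩,
    ⟨fun _ => 1, fun _ => Or.inl rfl, fun _ _ => rfl⟩, φ, isCompleteColouring_top_one hinj hrange⟩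

section UpperBound

variable {V : Type*} [Fintype V] {G : SimpleGraph V} {σ : V → V → ℤ} {k : ℕ} {φ : V → ℤ}

lemma IsCompleteColouring.two_le_card_natAbs_eq (h : IsCompleteColouring G σ k φ) {i : ℕ}
    (hi1 : 1 ≤ i) (hik : i ≤ k / 2) : 2 ≤ #{v | (φ v).natAbs = i} := by
  obtain ⟨u, v, huv, hu, hv, -⟩ :=
    h.2.2 i hi1 (mem_colourSet_iff.mpr ⟨by simpa using hik, fun _ => by omega⟩)
  exact one_lt_card.mpr ⟨u, by simpa using hu, v, by simpa using hv, huv.ne⟩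

lemma IsCompleteColouring.card_natAbs_eq_zero_pos [Nonempty V]
    (h : IsCompleteColouring G σ k φ) (hk : Odd k) : 0 < #{v | (φ v).natAbs = 0} := by
  rw [card_pos]
  by_cases hm : k / 2 = 0
  -- here `M_k = {0}`
  · obtain ⟨v⟩ := ‹Nonempty V›
    exact ⟨v, by simpa [hm] using (mem_colourSet_iff.mp (h.1.1 v)).1⟩
  · obtain ⟨⟨u, -, -, hu, -, -⟩, -⟩ := h.2.1 0 1
      (mem_colourSet_iff.mpr ⟨by simp, fun h => absurd h (Nat.not_even_iff_odd.mpr hk)⟩)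
      (mem_colourSet_iff.mpr ⟨by simp; omega, fun _ => by simp⟩) (by omega)
    exact ⟨u, by simpa using hu⟩

theorem IsCompleteColouring.le_card [Nonempty V] (h : IsCompleteColouring G σ k φ) :
    k ≤ Fintype.card V := by
  set m := k / 2
  have hcard : Fintype.card V = ∑ i ∈ range (m + 1), #{v | (φ v).natAbs = i} :=
    card_eq_sum_card_fiberwise fun v _ =>
      mem_range.mpr (Nat.lt_succ_of_le (mem_colourSet_iff.mp (h.1.1 v)).1)
  have hfibres : 2 * m ≤ ∑ i ∈ range m, #{v | (φ v).natAbs = i + 1} :=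
    calc 2 * m = ∑ _i ∈ range m, 2 := by simp [mul_comm]
      _ ≤ _ := sum_le_sum fun i hi =>
        h.two_le_card_natAbs_eq (by omega) (by have := mem_range.mp hi; omega)
  rw [sum_range_succ'] at hcard
  rcases Nat.even_or_odd k with hk | hk
  · have := Nat.even_iff.mp hk
    omega
  · have := Nat.odd_iff.mp hk
    have := h.card_natAbs_eq_zero_pos hk
    omega

theorem AdmitsComplete.le_card [Nonempty V] (h : AdmitsComplete G σ k) : k ≤ Fintype.card V := by
  obtain ⟨σ', -, -, φ, hφ⟩ := h
  exact hφ.le_card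

end UpperBound

/-- For every `n ≥ 1`, the all-positive signed complete graph `(K_n, +)`
satisfies `ψ(K_n, +) = n`. -/
theorem statement3 (n : ℕ) (hn : 1 ≤ n) :
    psi (⊤ : SimpleGraph (Fin n)) (fun _ _ => 1) = n := by
  have : Nonempty (Fin n) := ⟨⟨0, hn⟩⟩
  refine IsGreatest.csSup_eq ⟨admitsComplete_top_one n, fun k hk => ?_⟩
  simpa using hk.le_card
end

section
/- Let n ≥ 1 and let (P_n,σ) be any signed graph whose underlying graph is the path P_n on n vertices. Then ψ(P_n,σ) = max( {2x : x² ≤ n−1} ∪ {2x+1 : (x+1)² − 1 ≤ n−1} ), where x ranges over the non-negative integers. In particular, the value is independent of the signature σ. -/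
open SimpleGraph

/-!
Normalising a complete colouring (switch the negatively coloured vertices, take absolute values)
labels each edge by an unordered pair of colour values and a sign. Completeness asks for every
label formed by two distinct values with either sign, and by a nonzero value with itself and sign
`-1`: there are `x²` of them for `k = 2x` and `(x + 1)² - 1` for `k = 2x + 1`, and a path has only
`n - 1` edges. Conversely these labels are the edges of a multigraph on the colour values in which
every degree is even. An Eulerian closed walk through it, padded with negative loops at `1`, is laid
along the path: on a path any signature can be switched to prescribe the sign of every edge.
-/

open scoped Finset

def zeroColour (k : ℕ) : List ℕ := if Even k then [] else [0]

lemma natCast_mem_colourSet_s5 {k i : ℕ} :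
    (i : ℤ) ∈ colourSet k ↔ (i ∈ zeroColour k ∨ 1 ≤ i) ∧ i ≤ k / 2 := by
  by_cases hk : Even k <;> simp [colourSet, zeroColour, hk] <;> omega

lemma redSign_comm {V : Type*} {σ : V → V → ℤ} (hσ : ∀ u v, σ u v = σ v u) (φ : V → ℤ)
    (u v : V) : redSign σ φ u v = redSign σ φ v u := by
  simp only [redSign, hσ u v]
  ring

@[simp] lemma isgn_natCast (c : ℕ) : isgn c = 1 := by
  simp [isgn]

lemma HasEdgeType.symm {V : Type*} {G : SimpleGraph V} {σ : V → V → ℤ} {φ : V → ℤ}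
    {i j : ℕ} {s : ℤ} (hσ : ∀ u v, σ u v = σ v u) (h : HasEdgeType G σ φ i j s) :
    HasEdgeType G σ φ j i s := by
  obtain ⟨u, v, hadj, hu, hv, hs⟩ := h
  exact ⟨v, u, hadj.symm, hv, hu, redSign_comm hσ φ v u ▸ hs⟩

section Counting

variable {V : Type*} {σ : V → V → ℤ}

/-- The label of an edge once the colouring is normalised: the unordered pair of absolute
values of the colours at its ends, and its sign after switching the negatively coloured ends. -/
def edgeLabel (hσ : ∀ u v, σ u v = σ v u) (φ : V → ℤ) : Sym2 V → Sym2 ℕ × ℤ :=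
  Sym2.lift ⟨fun u v => (s((φ u).natAbs, (φ v).natAbs), redSign σ φ u v), fun u v => by
    simp only [Sym2.eq_swap, redSign_comm hσ φ u v]⟩

/-- Encodes the edge types demanded by completeness by ordered pairs of colour values:
`(a, b)` with `a < b` stands for a positive `ab`-edge, with `a ≥ b` for a negative one. -/
def pairLabel (p : ℕ × ℕ) : Sym2 ℕ × ℤ := (s(p.1, p.2), if p.1 < p.2 then 1 else -1)

lemma pairLabel_injective : Function.Injective pairLabel := by
  rintro ⟨a, b⟩ ⟨c, d⟩ h
  simp only [pairLabel, Prod.mk.injEq, Sym2.eq_iff] at h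
  obtain ⟨h | h, hs⟩ := h
  · rw [h.1, h.2]
  · split_ifs at hs <;> simp_all <;> omega

lemma IsCompleteColouring.exists_edgeLabel_eq {G : SimpleGraph V} {k : ℕ} {φ : V → ℤ}
    (hσ : ∀ u v, σ u v = σ v u) (hφ : IsCompleteColouring G σ k φ) {a b : ℕ}
    (ha : (a : ℤ) ∈ colourSet k) (hb : (b : ℤ) ∈ colourSet k) (hab : (a, b) ≠ (0, 0)) :
    ∃ e ∈ G.edgeSet, edgeLabel hσ φ e = pairLabel (a, b) := by
  have htype : HasEdgeType G σ φ a b (if a < b then 1 else -1) := by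
    rcases lt_trichotomy a b with h | rfl | h
    · simpa [h] using (hφ.2.1 a b ha hb h.ne).1
    · simpa using hφ.2.2 a (by simp_all; omega) ha
    · simpa [h.not_gt] using (hφ.2.1 a b ha hb h.ne').2
  obtain ⟨u, v, huv, hu, hv, hs⟩ := htype
  exact ⟨s(u, v), huv, by simp [edgeLabel, pairLabel, hu, hv, hs]⟩

theorem IsCompleteColouring.card_le_card_edgeFinset {G : SimpleGraph V} [Fintype G.edgeSet]
    {k : ℕ} {φ : V → ℤ} (hσ : ∀ u v, σ u v = σ v u) (hφ : IsCompleteColouring G σ k φ)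
    (S : Finset ℕ) (hS : ∀ i ∈ S, (i : ℤ) ∈ colourSet k) :
    #((S ×ˢ S).erase (0, 0)) ≤ #G.edgeFinset := by
  classical
  rw [← Finset.card_image_of_injective _ pairLabel_injective]
  refine Finset.card_le_card_of_surjOn (edgeLabel hσ φ) ?_
  intro l hl
  obtain ⟨⟨a, b⟩, hp, rfl⟩ := Finset.mem_image.mp hl
  obtain ⟨hab, hp⟩ := Finset.mem_erase.mp hp
  obtain ⟨ha, hb⟩ := Finset.mem_product.mp hp
  obtain ⟨e, he, hl⟩ := hφ.exists_edgeLabel_eq hσ (hS a ha) (hS b hb) hab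
  exact ⟨e, by simpa using he, hl⟩

end Counting

lemma card_edgeFinset_pathGraph_le (n : ℕ) [Fintype (pathGraph n).edgeSet] :
    #(pathGraph n).edgeFinset ≤ n - 1 := by
  let low : Sym2 (Fin n) → ℕ := Sym2.lift ⟨fun u v => min u.val v.val, fun _ _ => min_comm _ _⟩
  have hlow : ∀ u v : Fin n, u.val + 1 = v.val → low s(u, v) = u.val ∧ low s(v, u) = u.val := by
    intro u v h
    simp only [low, Sym2.lift_mk]
    omega
  rw [← Finset.card_range (n - 1)]
  refine Finset.card_le_card_of_injOn low ?_ ?_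
  · intro e he
    induction e using Sym2.ind with
    | _ u v =>
    have := u.isLt
    have := v.isLt
    rw [Finset.coe_range, Set.mem_Iio]
    rcases pathGraph_adj.mp (by simpa using he) with h | h
    · rw [(hlow _ _ h).1]; omega
    · rw [(hlow _ _ h).2]; omega
  · intro e he e' he' hee'
    induction e using Sym2.ind with
    | _ u v =>
    induction e' using Sym2.ind with
    | _ u' v' =>
    have hadj := pathGraph_adj.mp (by simpa using he)
    have hadj' := pathGraph_adj.mp (by simpa using he')
    simp only [low, Sym2.lift_mk] at hee'
    simp only [Sym2.eq_iff, Fin.ext_iff]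
    omega

lemma AdmitsComplete.sq_le_card_edgeFinset {V : Type*} {G : SimpleGraph V} [Fintype G.edgeSet]
    {σ : V → V → ℤ} {x : ℕ} (h : AdmitsComplete G σ (2 * x)) : x ^ 2 ≤ #G.edgeFinset := by
  obtain ⟨σ', hσ', -, φ, hφ⟩ := h
  have hS : ∀ i ∈ Finset.Icc 1 x, (i : ℤ) ∈ colourSet (2 * x) := by
    intro i hi
    simp only [Finset.mem_Icc] at hi
    simp [natCast_mem_colourSet_s5, zeroColour]
    omega
  have := hφ.card_le_card_edgeFinset hσ'.1 _ hS
  rwa [Finset.erase_eq_of_notMem (by simp), Finset.card_product, Nat.card_Icc, ← sq,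
    Nat.add_sub_cancel] at this

lemma AdmitsComplete.sq_sub_one_le_card_edgeFinset {V : Type*} {G : SimpleGraph V}
    [Fintype G.edgeSet] {σ : V → V → ℤ} {x : ℕ} (h : AdmitsComplete G σ (2 * x + 1)) :
    (x + 1) ^ 2 - 1 ≤ #G.edgeFinset := by
  obtain ⟨σ', hσ', -, φ, hφ⟩ := h
  have hS : ∀ i ∈ Finset.range (x + 1), (i : ℤ) ∈ colourSet (2 * x + 1) := by
    intro i hi
    simp only [Finset.mem_range] at hi
    simp [natCast_mem_colourSet_s5, zeroColour]
    omega
  have := hφ.card_le_card_edgeFinset hσ'.1 _ hS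
  rwa [Finset.card_erase_of_mem (by simp), Finset.card_product, Finset.card_range, ← sq] at this

theorem exists_switchEquiv_pathGraph {n : ℕ} {σ : Fin n → Fin n → ℤ} (hσ : IsSignature σ)
    (t : ℕ → ℤ) (ht : ∀ m, m + 1 < n → IsUnit (t m)) :
    ∃ σ', IsSignature σ' ∧ SwitchEquiv σ σ' ∧
      ∀ u v : Fin n, u.val + 1 = v.val → σ' u v = t u := by
  have hσu : ∀ u v, IsUnit (σ u v) := fun u v => Int.isUnit_iff.mpr (hσ.2 u v)
  -- switch `v` by the product of the corrections needed on the edges of the path before `v`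
  let a : ℕ → ℤ := fun m => if h : m + 1 < n then σ ⟨m, by omega⟩ ⟨m + 1, h⟩ * t m else 1
  let f : Fin n → ℤ := fun v => ∏ m ∈ Finset.range v, a m
  have hf : ∀ v, IsUnit (f v) := fun v =>
    Finset.prod_induction _ _ (fun _ _ => IsUnit.mul) isUnit_one fun m _ => by
      by_cases h : m + 1 < n
      · simpa [a, h] using (hσu _ _).mul (ht m h)
      · simp [a, h]
  refine ⟨fun u v => f u * f v * σ u v,
    ⟨fun u v => by simp only [hσ.1 u v]; ring,
      fun u v => Int.isUnit_iff.mp (((hf u).mul (hf v)).mul (hσu u v))⟩,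
    ⟨f, fun v => Int.isUnit_iff.mp (hf v), fun _ _ => rfl⟩, fun u v huv => ?_⟩
  have hfv : f v = f u * (σ u v * t u) := by
    have hv : v.val < n := v.isLt
    simp only [f, ← huv, Finset.prod_range_succ, a, dif_pos (huv ▸ hv : u.val + 1 < n)]
    congr 3
    exact Fin.ext huv
  calc f u * f v * σ u v = (f u * f u) * (σ u v * σ u v) * t u := by rw [hfv]; ring
    _ = t u := by rw [Int.isUnit_mul_self (hf u), Int.isUnit_mul_self (hσu u v)]; ring

/-- A signed edge of the multigraph on colour values, traversed from `src` to `tgt`. -/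
structure ColourStep where
  src : ℕ
  sign : ℤ
  tgt : ℕ

namespace ColourStep

def reverse (e : ColourStep) : ColourStep := ⟨e.tgt, e.sign, e.src⟩

def IsProper (e : ColourStep) : Prop := IsUnit e.sign ∧ (e.src : ℤ) ≠ e.sign * e.tgt

lemma IsProper.reverse {e : ColourStep} (h : e.IsProper) : e.reverse.IsProper := by
  refine ⟨h.1, fun heq => h.2 ?_⟩
  rcases Int.isUnit_iff.mp h.1 with hs | hs <;> simp only [ColourStep.reverse, hs] at heq ⊢ <;>
    omega

end ColourStep

/-- Vertex `m` of the path is coloured by the start of step `m`, and the signature is switched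
so that the edge from `m` to `m + 1` gets the sign of step `m`. -/
theorem admitsComplete_pathGraph_of_steps {n k : ℕ} {σ : Fin n → Fin n → ℤ}
    (hσ : IsSignature σ) (F : ℕ → ColourStep)
    (hcol : ∀ m < n, ((F m).src : ℤ) ∈ colourSet k)
    (hchain : ∀ m, m + 1 < n → (F m).tgt = (F (m + 1)).src)
    (hproper : ∀ m, m + 1 < n → (F m).IsProper)
    (hcov : ∀ i j : ℕ, (i : ℤ) ∈ colourSet k → (j : ℤ) ∈ colourSet k → i < j → ∀ s : ℤ,
      IsUnit s → ∃ m, m + 1 < n ∧ (F m = ⟨i, s, j⟩ ∨ F m = ⟨j, s, i⟩))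
    (hcov_loop : ∀ i : ℕ, 1 ≤ i → (i : ℤ) ∈ colourSet k →
      ∃ m, m + 1 < n ∧ F m = ⟨i, -1, i⟩) :
    AdmitsComplete (pathGraph n) σ k := by
  obtain ⟨σ', hσ', hsw, hedge⟩ :=
    exists_switchEquiv_pathGraph hσ (fun m => (F m).sign) fun m hm => (hproper m hm).1
  let φ : Fin n → ℤ := fun v => (F v).src
  have hstep : ∀ m (hm : m + 1 < n), HasEdgeType (pathGraph n) σ' φ (F m).src (F m).tgt
      (F m).sign := fun m hm =>
    ⟨⟨m, by omega⟩, ⟨m + 1, hm⟩, pathGraph_adj.mpr (Or.inl rfl), by simp [φ],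
      by simp [φ, hchain m hm], by simpa [redSign, φ] using hedge ⟨m, by omega⟩ ⟨m + 1, hm⟩ rfl⟩
  have hcovered : ∀ e : ColourStep, (∃ m, m + 1 < n ∧ (F m = e ∨ F m = e.reverse)) →
      HasEdgeType (pathGraph n) σ' φ e.src e.tgt e.sign := by
    rintro e ⟨m, hm, rfl | he⟩
    · exact hstep m hm
    · simpa [he, ColourStep.reverse] using (hstep m hm).symm hσ'.1
  refine ⟨σ', hσ', hsw, φ, ⟨fun v => hcol v v.isLt, fun u v huv => ?_⟩, ?_, ?_⟩
  · rcases pathGraph_adj.mp huv with h | h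
    · have := (hproper u (h ▸ v.isLt)).2
      rwa [hedge u v h, show φ v = (F u).tgt by simp [φ, ← h, hchain u (h ▸ v.isLt)]]
    · have := (hproper v (h ▸ u.isLt)).reverse.2
      rwa [hσ'.1, hedge v u h, show φ u = (F v).tgt by simp [φ, ← h, hchain v (h ▸ u.isLt)]]
  · intro i j hi hj hij
    rcases hij.lt_or_gt with h | h
    · exact ⟨hcovered ⟨i, 1, j⟩ (hcov i j hi hj h 1 isUnit_one),
        hcovered ⟨i, -1, j⟩ (hcov i j hi hj h (-1) isUnit_one.neg)⟩
    · exact ⟨(hcovered ⟨j, 1, i⟩ (hcov j i hj hi h 1 isUnit_one)).symm hσ'.1,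
        (hcovered ⟨j, -1, i⟩ (hcov j i hj hi h (-1) isUnit_one.neg)).symm hσ'.1⟩
  · intro i hi hik
    obtain ⟨m, hm, he⟩ := hcov_loop i hi hik
    exact hcovered ⟨i, -1, i⟩ ⟨m, hm, Or.inl he⟩

def IsWalk : List ColourStep → ℕ → ℕ → Prop
  | [], a, b => a = b
  | e :: W, a, b => e.src = a ∧ IsWalk W e.tgt b

lemma IsWalk.append {A B : List ColourStep} {a b c : ℕ} (hA : IsWalk A a b)
    (hB : IsWalk B b c) : IsWalk (A ++ B) a c := by
  induction A generalizing a with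
  | nil => exact (show a = b from hA) ▸ hB
  | cons e A ih => exact ⟨hA.1, ih hA.2⟩

lemma IsWalk.src_getD_zero {W : List ColourStep} {a b : ℕ} (hW : IsWalk W a b) (s : ℤ) :
    (W.getD 0 ⟨b, s, b⟩).src = a := by
  cases W with
  | nil => exact (show a = b from hW).symm
  | cons e W => exact hW.1

/-- Padding a walk ending at `b` with loops at `b` gives an infinite walk. -/
lemma IsWalk.tgt_getD {W : List ColourStep} {a b : ℕ} (hW : IsWalk W a b) (s : ℤ) (m : ℕ) :
    (W.getD m ⟨b, s, b⟩).tgt = (W.getD (m + 1) ⟨b, s, b⟩).src := by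
  induction W generalizing a m with
  | nil => rfl
  | cons e W ih =>
    cases m with
    | zero => exact (hW.2.src_getD_zero s).symm
    | succ m => exact ih hW.2 m

theorem admitsComplete_pathGraph_of_walk {n k : ℕ} {σ : Fin n → Fin n → ℤ}
    (hσ : IsSignature σ) {W : List ColourStep} {a b : ℕ} (hW : IsWalk W a b) (hb : 1 ≤ b)
    (hbk : (b : ℤ) ∈ colourSet k) (hlen : W.length ≤ n - 1)
    (hproper : ∀ e ∈ W, e.IsProper ∧ (e.src : ℤ) ∈ colourSet k)
    (hcov : ∀ i j : ℕ, (i : ℤ) ∈ colourSet k → (j : ℤ) ∈ colourSet k → i < j → ∀ s : ℤ,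
      IsUnit s → ⟨i, s, j⟩ ∈ W ∨ ⟨j, s, i⟩ ∈ W)
    (hcov_loop : ∀ i : ℕ, 1 ≤ i → (i : ℤ) ∈ colourSet k → ⟨i, -1, i⟩ ∈ W) :
    AdmitsComplete (pathGraph n) σ k := by
  let pad : ColourStep := ⟨b, -1, b⟩
  have hpad : pad.IsProper ∧ (pad.src : ℤ) ∈ colourSet k :=
    ⟨⟨isUnit_one.neg, by simp [pad]; omega⟩, hbk⟩
  have hgood : ∀ m, (W.getD m pad).IsProper ∧ ((W.getD m pad).src : ℤ) ∈ colourSet k := by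
    intro m
    rcases lt_or_ge m W.length with h | h
    · rw [List.getD_eq_getElem W pad h]
      exact hproper _ (List.getElem_mem h)
    · rw [List.getD_eq_default W pad h]
      exact hpad
  have hindex : ∀ e ∈ W, ∃ m, m + 1 < n ∧ W.getD m pad = e := by
    intro e he
    obtain ⟨m, hm, rfl⟩ := List.mem_iff_getElem.mp he
    exact ⟨m, by omega, List.getD_eq_getElem W pad hm⟩
  refine admitsComplete_pathGraph_of_steps hσ (fun m => W.getD m pad) (fun m _ => (hgood m).2)
    (fun m _ => hW.tgt_getD (-1) m) (fun m _ => (hgood m).1) ?_ ?_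
  · intro i j hi hj hij s hs
    rcases hcov i j hi hj hij s hs with h | h
    · obtain ⟨m, hm, he⟩ := hindex _ h
      exact ⟨m, hm, Or.inl he⟩
    · obtain ⟨m, hm, he⟩ := hindex _ h
      exact ⟨m, hm, Or.inr he⟩
  · intro i hi hik
    exact hindex _ (hcov_loop i hi hik)

def spokes (y : ℕ) (l : List ℕ) : List ColourStep :=
  l.flatMap fun i => [⟨y, 1, i⟩, ⟨i, -1, y⟩]

/-- A closed walk at `1` through all the edges between `y` and `1` or `l`, and the loop at `y`. -/
def excursion (y : ℕ) (l : List ℕ) : List ColourStep :=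
  ⟨1, 1, y⟩ :: ⟨y, -1, y⟩ :: (spokes y l ++ [⟨y, -1, 1⟩])

/-- An Eulerian closed walk at `1` in the multigraph of edge types required of a complete
colouring with colour values up to `y` (and `0` if `k` is odd). -/
def colourWalk (k : ℕ) : ℕ → List ColourStep
  | 0 => []
  | 1 => ⟨1, -1, 1⟩ :: spokes 1 (zeroColour k)
  | y + 2 => colourWalk k (y + 1) ++ excursion (y + 2) (zeroColour k ++ List.range' 2 y)

lemma eq_zero_of_mem_zeroColour {k i : ℕ} (h : i ∈ zeroColour k) : i = 0 := by
  unfold zeroColour at h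
  split_ifs at h <;> simp_all

lemma mem_spokes {y : ℕ} {l : List ℕ} {e : ColourStep} :
    e ∈ spokes y l ↔ ∃ i ∈ l, e = ⟨y, 1, i⟩ ∨ e = ⟨i, -1, y⟩ := by
  simp [spokes]

lemma isWalk_spokes (y : ℕ) (l : List ℕ) : IsWalk (spokes y l) y y := by
  induction l with
  | nil => rfl
  | cons i l ih => exact ⟨rfl, rfl, ih⟩

lemma isWalk_excursion (y : ℕ) (l : List ℕ) : IsWalk (excursion y l) 1 1 :=
  ⟨rfl, rfl, (isWalk_spokes y l).append ⟨rfl, rfl⟩⟩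

lemma isWalk_colourWalk (k : ℕ) : ∀ y, IsWalk (colourWalk k y) 1 1
  | 0 => rfl
  | 1 => ⟨rfl, isWalk_spokes 1 _⟩
  | y + 2 => (isWalk_colourWalk k (y + 1)).append (isWalk_excursion _ _)

lemma length_colourWalk (k : ℕ) :
    ∀ y, (colourWalk k y).length = y ^ 2 + 2 * y * (zeroColour k).length
  | 0 => by simp [colourWalk]
  | 1 => by simp [colourWalk, spokes, List.length_flatMap]; ring
  | y + 2 => by
    simp [colourWalk, excursion, spokes, List.length_flatMap, length_colourWalk k (y + 1)]
    ring

lemma mem_colourWalk_of_le (k : ℕ) {y y' : ℕ} (h : y ≤ y') {e : ColourStep}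
    (he : e ∈ colourWalk k y) : e ∈ colourWalk k y' := by
  induction h with
  | refl => exact he
  | @step m _ ih =>
    cases m with
    | zero => simp [colourWalk] at ih
    | succ m => exact List.mem_append_left _ ih

lemma isProper_and_src_le_of_mem_colourWalk (k : ℕ) :
    ∀ y, ∀ e ∈ colourWalk k y, e.IsProper ∧ (e.src ∈ zeroColour k ∨ 1 ≤ e.src) ∧ e.src ≤ y
  | 0 => by simp [colourWalk]
  | 1 => by
    intro e he
    simp only [colourWalk, List.mem_cons, mem_spokes] at he
    rcases he with rfl | ⟨i, hi, rfl | rfl⟩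
    · simp [ColourStep.IsProper]
    all_goals obtain rfl := eq_zero_of_mem_zeroColour hi
    all_goals simp [ColourStep.IsProper, hi]
  | y + 2 => by
    intro e he
    simp only [colourWalk, excursion, List.mem_append, List.mem_cons, mem_spokes,
      List.mem_range'_1, List.not_mem_nil, or_false] at he
    rcases he with he | rfl | rfl | ⟨i, hi, rfl | rfl⟩ | rfl
    · have := isProper_and_src_le_of_mem_colourWalk k (y + 1) e he
      exact ⟨this.1, this.2.1, by omega⟩
    · simp [ColourStep.IsProper]; omega
    · simp [ColourStep.IsProper]; omega
    iterate 2
      rcases hi with hi | hi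
      · obtain rfl := eq_zero_of_mem_zeroColour hi
        simp [ColourStep.IsProper, hi]
        omega
      · simp [ColourStep.IsProper]
        omega
    · simp [ColourStep.IsProper]; omega

lemma mem_colourWalk_or_reverse_of_lt (k : ℕ) {y i : ℕ} (hi : i ∈ zeroColour k ∨ 1 ≤ i)
    (hiy : i < y) {s : ℤ} (hs : IsUnit s) :
    ⟨i, s, y⟩ ∈ colourWalk k y ∨ ⟨y, s, i⟩ ∈ colourWalk k y := by
  rcases y with _ | _ | y
  · omega
  · have hi : i ∈ zeroColour k := hi.resolve_right (by omega)
    rcases Int.isUnit_iff.mp hs with rfl | rfl <;> simp [colourWalk, mem_spokes, hi]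
  · have hmem : i = 1 ∨ i ∈ zeroColour k ∨ 2 ≤ i ∧ i < 2 + y := by
      rcases hi with hi | hi
      · exact Or.inr (Or.inl hi)
      · omega
    rcases hmem with rfl | hmem
    · rcases Int.isUnit_iff.mp hs with rfl | rfl <;> simp [colourWalk, excursion]
    · rcases Int.isUnit_iff.mp hs with rfl | rfl <;>
        simp [colourWalk, excursion, mem_spokes, hmem]

lemma loop_mem_colourWalk (k : ℕ) {y : ℕ} (hy : 1 ≤ y) : ⟨y, -1, y⟩ ∈ colourWalk k y := by
  rcases y with _ | _ | y
  · omega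
  · simp [colourWalk]
  · simp [colourWalk, excursion]

theorem admitsComplete_pathGraph_of_length_colourWalk_le {n k : ℕ} {σ : Fin n → Fin n → ℤ}
    (hσ : IsSignature σ) (hk : 2 ≤ k) (hlen : (colourWalk k (k / 2)).length ≤ n - 1) :
    AdmitsComplete (pathGraph n) σ k := by
  refine admitsComplete_pathGraph_of_walk hσ (isWalk_colourWalk k (k / 2)) le_rfl
    (natCast_mem_colourSet_s5.mpr ⟨Or.inr le_rfl, by omega⟩) hlen ?_ ?_ ?_
  · intro e he
    obtain ⟨hproper, hcol, hle⟩ := isProper_and_src_le_of_mem_colourWalk k _ e he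
    exact ⟨hproper, natCast_mem_colourSet_s5.mpr ⟨hcol, hle⟩⟩
  · intro i j hi hj hij s hs
    rw [natCast_mem_colourSet_s5] at hi hj
    exact (mem_colourWalk_or_reverse_of_lt k hi.1 hij hs).imp (mem_colourWalk_of_le k hj.2)
      (mem_colourWalk_of_le k hj.2)
  · intro i hi hik
    exact mem_colourWalk_of_le k (natCast_mem_colourSet_s5.mp hik).2 (loop_mem_colourWalk k hi)

theorem admitsComplete_pathGraph_two_mul {n x : ℕ} {σ : Fin n → Fin n → ℤ}
    (hσ : IsSignature σ) (hx : 1 ≤ x) (h : x ^ 2 ≤ n - 1) :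
    AdmitsComplete (pathGraph n) σ (2 * x) :=
  admitsComplete_pathGraph_of_length_colourWalk_le hσ (by omega)
    (by simpa [length_colourWalk, zeroColour] using h)

theorem admitsComplete_pathGraph_two_mul_add_one {n x : ℕ} {σ : Fin n → Fin n → ℤ}
    (hσ : IsSignature σ) (hx : 1 ≤ x) (h : (x + 1) ^ 2 - 1 ≤ n - 1) :
    AdmitsComplete (pathGraph n) σ (2 * x + 1) := by
  refine admitsComplete_pathGraph_of_length_colourWalk_le hσ (by omega) ?_
  have hk : (2 * x + 1) / 2 = x := by omega
  simp only [length_colourWalk, zeroColour, hk, Nat.not_even_bit1, if_false,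
    List.length_singleton]
  have : (x + 1) ^ 2 = x ^ 2 + 2 * x * 1 + 1 := by ring
  omega

theorem admitsComplete_pathGraph_one {n : ℕ} {σ : Fin n → Fin n → ℤ} (hσ : IsSignature σ)
    (hn : n ≤ 1) : AdmitsComplete (pathGraph n) σ 1 := by
  refine admitsComplete_pathGraph_of_steps hσ (fun _ => ⟨0, 1, 0⟩) (fun _ _ => ?_)
    (fun _ _ => by omega) (fun _ _ => by omega) (fun i j hi hj hij => ?_) (fun i hi hik => ?_)
  · simp [colourSet]
  · rw [natCast_mem_colourSet_s5] at hi hj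
    omega
  · rw [natCast_mem_colourSet_s5] at hik
    omega

def achromaticBound (n : ℕ) : Set ℕ :=
  {k | ∃ x : ℕ, k = 2 * x ∧ x ^ 2 ≤ n - 1} ∪
    {k | ∃ x : ℕ, k = 2 * x + 1 ∧ (x + 1) ^ 2 - 1 ≤ n - 1}

lemma bddAbove_achromaticBound (n : ℕ) : BddAbove (achromaticBound n) := by
  refine ⟨2 * n + 1, ?_⟩
  rintro k (⟨x, rfl, hx⟩ | ⟨x, rfl, hx⟩)
  · have := Nat.le_self_pow two_ne_zero x
    omega
  · have := Nat.le_self_pow two_ne_zero (x + 1)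
    omega

lemma AdmitsComplete.mem_achromaticBound {n k : ℕ} {σ : Fin n → Fin n → ℤ}
    (h : AdmitsComplete (pathGraph n) σ k) : k ∈ achromaticBound n := by
  classical
  obtain ⟨x, rfl | rfl⟩ := Nat.even_or_odd' k
  · exact Or.inl ⟨x, rfl, h.sq_le_card_edgeFinset.trans (card_edgeFinset_pathGraph_le n)⟩
  · exact Or.inr ⟨x, rfl, h.sq_sub_one_le_card_edgeFinset.trans (card_edgeFinset_pathGraph_le n)⟩

theorem admitsComplete_sSup_achromaticBound {n : ℕ} {σ : Fin n → Fin n → ℤ}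
    (hσ : IsSignature σ) : AdmitsComplete (pathGraph n) σ (sSup (achromaticBound n)) := by
  have hbdd := bddAbove_achromaticBound n
  have h1 : 1 ∈ achromaticBound n := Or.inr ⟨0, rfl, by simp⟩
  have hle := le_csSup hbdd h1
  rcases Nat.sSup_mem ⟨1, h1⟩ hbdd with ⟨x, hx, h⟩ | ⟨x, hx, h⟩ <;> rw [hx] at hle ⊢
  · exact admitsComplete_pathGraph_two_mul hσ (by omega) h
  · rcases Nat.eq_zero_or_pos x with rfl | hx0
    · have hn : n ≤ 1 := by
        by_contra hn
        have := le_csSup hbdd (Or.inl ⟨1, rfl, by omega⟩ : 2 ∈ achromaticBound n)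
        omega
      exact admitsComplete_pathGraph_one hσ hn
    · exact admitsComplete_pathGraph_two_mul_add_one hσ hx0 h

theorem statement5_general (n : ℕ) (σ : Fin n → Fin n → ℤ) (hσ : IsSignature σ) :
    psi (SimpleGraph.pathGraph n) σ =
      sSup ({k | ∃ x : ℕ, k = 2 * x ∧ x ^ 2 ≤ n - 1} ∪
            {k | ∃ x : ℕ, k = 2 * x + 1 ∧ (x + 1) ^ 2 - 1 ≤ n - 1}) :=
  IsGreatest.csSup_eq ⟨admitsComplete_sSup_achromaticBound hσ,
    fun _ hk => le_csSup (bddAbove_achromaticBound n) hk.mem_achromaticBound⟩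

/-- For every `n ≥ 1` and every signature `σ` of the path `P_n`,
`ψ(P_n, σ) = max({2x : x² ≤ n−1} ∪ {2x+1 : (x+1)² − 1 ≤ n−1})`. -/
theorem statement5 (n : ℕ) (hn : 1 ≤ n) (σ : Fin n → Fin n → ℤ) (hσ : IsSignature σ) :
    psi (SimpleGraph.pathGraph n) σ =
      sSup ({k | ∃ x : ℕ, k = 2 * x ∧ x ^ 2 ≤ n - 1} ∪
            {k | ∃ x : ℕ, k = 2 * x + 1 ∧ (x + 1) ^ 2 - 1 ≤ n - 1}) :=
  statement5_general n σ hσ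
end
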